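/- For every ε > 0 there exists a constant C (depending only on ε) with the following property. Let δ ∈ (0,1], T > 0, and let π = (γ, v, D, α) : [0,T] → ℝ⁴ be continuously differentiable with |π'(t)| ≤ δ²(1+t)^(−2−ε) and |v(t)| + |D(t)| + |α(t)| ≤ 1 for all t ∈ [0,T]. Then for all 0 ≤ t ≤ T and all x ∈ ℝ: |ρ_T(t,x)| ≤ C δ² (1+|x|)(1+t)^(−ε), |y(t) − y_T(t)| ≤ C δ² (1+t)^(−ε), |∂ₜ ρ_T(t,x)| ≤ C δ² (1+|x|)(1+t)^(−1−ε), and |y'(t) − 2v_T| ≤ C δ² (1+t)^(−1−ε). -/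

import Mathlib

/-!
Every component `f` of `π` satisfies `|f'(s)| ≤ δ² (1 + s)^(-2-ε)`. Integrating once from `t` to `T`
gives `|f t - f T| ≤ δ² (1 + t)^(-1-ε)`, integrating twice `|∫ₜᵀ (f - f T)| ≤ δ² ε⁻¹ (1 + t)^(-ε)`.
By the fundamental theorem of calculus the double integrals defining `γ_T` and `D_T` collapse,
`∫₀ᵀ ∫ₜᵀ f' = -∫₀ᵀ (f - f T)`, and the four quantities to be estimated become
* `ρ_T(t, x) = (v t - v T) (x + y_T t) + (γ t - γ T) + ∫ₜᵀ (v² - α² - (v T² - α T²))`,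
* `y t - y_T t = D t - D T - 2 ∫ₜᵀ (v - v T)`,
* `∂ₜρ_T(t, x) = v' t (x + y_T t) + γ' t + (α t² - α T² - (v t - v T)²)`,
* `y' t - 2 v_T = 2 (v t - v T) + D' t`.
Each term is bounded by one of the two tail estimates, using `|v|, |α| ≤ 1` and
`|x + y_T t| ≤ (3 + 2/ε) (1 + |x|) (1 + t)`.
-/

noncomputable section

open Real Set MeasureTheory intervalIntegral

theorem integral_one_add_rpow_neg_le {p a b : ℝ} (hp : 0 < p) (ha : 0 ≤ a) (hab : a ≤ b) :
    ∫ s in a..b, (1 + s) ^ (-(1 + p)) ≤ (1 + a) ^ (-p) / p := by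
  have h0 : (0 : ℝ) ∉ uIcc (1 + a) (1 + b) := by
    rw [uIcc_of_le (by linarith)]
    exact fun h => by linarith [h.1]
  rw [integral_comp_add_left (fun s => s ^ (-(1 + p))),
    integral_rpow (Or.inr ⟨by linarith, h0⟩), show -(1 + p) + 1 = -p by ring, div_neg,
    ← neg_div, neg_sub]
  have : 0 ≤ (1 + b) ^ (-p) := rpow_nonneg (by linarith) _
  gcongr
  exact sub_le_self _ this

theorem abs_integral_le_of_abs_le_one_add_rpow {f : ℝ → ℝ} {c p a b : ℝ} (hp : 0 < p)
    (hc : 0 ≤ c) (ha : 0 ≤ a) (hab : a ≤ b)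
    (hf : ∀ s ∈ Icc a b, |f s| ≤ c * (1 + s) ^ (-(1 + p))) :
    |∫ s in a..b, f s| ≤ c / p * (1 + a) ^ (-p) := by
  have hint : IntervalIntegrable (fun s => (1 + s) ^ (-(1 + p))) volume a b := by
    refine ContinuousOn.intervalIntegrable fun s hs => ?_
    have : 0 < 1 + s := by rw [uIcc_of_le hab] at hs; linarith [hs.1]
    exact ((continuousAt_const.add continuousAt_id).rpow_const
      (Or.inl this.ne')).continuousWithinAt
  calc |∫ s in a..b, f s| ≤ ∫ s in a..b, c * (1 + s) ^ (-(1 + p)) :=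
        intervalIntegral.norm_integral_le_of_norm_le (f := f) hab
          (ae_of_all _ fun s hs => hf s (Ioc_subset_Icc_self hs)) (hint.const_mul c)
    _ = c * ∫ s in a..b, (1 + s) ^ (-(1 + p)) := integral_const_mul c _
    _ ≤ c * ((1 + a) ^ (-p) / p) := by gcongr; exact integral_one_add_rpow_neg_le hp ha hab
    _ = c / p * (1 + a) ^ (-p) := by ring

theorem one_add_rpow_mul_self {t r s : ℝ} (ht : 0 ≤ t) (hrs : r + 1 = s) :
    (1 + t) ^ r * (1 + t) = (1 + t) ^ s := by
  rw [← hrs, rpow_add_one (by positivity)]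

theorem mul_le_mul_one_add_abs_mul {K P : ℝ} (hK : 0 ≤ K) (hP : 0 ≤ P) (x : ℝ) :
    K * P ≤ K * (1 + |x|) * P := by
  rw [mul_right_comm]
  exact le_mul_of_one_le_right (mul_nonneg hK hP) (le_add_of_nonneg_right (abs_nonneg x))

theorem abs_sq_sub_sq_le {a b : ℝ} (ha : |a| ≤ 1) (hb : |b| ≤ 1) :
    |a ^ 2 - b ^ 2| ≤ 2 * |a - b| := by
  rw [sq_sub_sq, abs_mul]
  gcongr
  linarith [abs_add_le a b]

theorem sq_sub_le_two_mul_abs {a b : ℝ} (ha : |a| ≤ 1) (hb : |b| ≤ 1) :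
    (a - b) ^ 2 ≤ 2 * |a - b| := by
  rw [← sq_abs, sq]
  gcongr
  linarith [abs_sub a b]

theorem integral_eq_sub_of_hasDerivWithinAt_Icc {f f' : ℝ → ℝ} {l r a b : ℝ}
    (hf : ∀ t ∈ Icc l r, HasDerivWithinAt f (f' t) (Icc l r) t)
    (hf' : ContinuousOn f' (Icc l r)) (hab : a ≤ b) (hsub : Icc a b ⊆ Icc l r) :
    ∫ s in a..b, f' s = f b - f a :=
  integral_eq_sub_of_hasDerivAt_of_le hab
    (fun t ht => (hf t (hsub ht)).continuousWithinAt.mono hsub)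
    (fun t ht => (hf t (hsub (Ioo_subset_Icc_self ht))).hasDerivAt
      (Filter.mem_of_superset (Ioo_mem_nhds ht.1 ht.2) (Ioo_subset_Icc_self.trans hsub)))
    ((hf'.mono hsub).intervalIntegrable_of_Icc hab)

theorem integral_integral_deriv_eq {f f' : ℝ → ℝ} {l r : ℝ} (hlr : l ≤ r)
    (hf : ∀ t ∈ Icc l r, HasDerivWithinAt f (f' t) (Icc l r) t)
    (hf' : ContinuousOn f' (Icc l r)) :
    ∫ t in l..r, ∫ s in t..r, f' s = -∫ t in l..r, (f t - f r) := by
  rw [← intervalIntegral.integral_neg]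
  refine integral_congr fun t ht => ?_
  rw [uIcc_of_le hlr] at ht
  rw [neg_sub]
  exact integral_eq_sub_of_hasDerivWithinAt_Icc hf hf' ht.2 (Icc_subset_Icc ht.1 le_rfl)

theorem integral_tail_sub_const {h : ℝ → ℝ} {l r t : ℝ} (hh : ContinuousOn h (Icc l r))
    (ht : t ∈ Icc l r) (a : ℝ) :
    ∫ s in t..r, (h s - a) = (∫ s in l..r, (h s - a)) - ((∫ s in l..t, h s) - (t - l) * a) := by
  have hconst {u v : ℝ} : IntervalIntegrable (fun _ => a) volume u v := intervalIntegrable_const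
  have hlt : IntervalIntegrable h volume l t :=
    (hh.mono (Icc_subset_Icc le_rfl ht.2)).intervalIntegrable_of_Icc ht.1
  have htr : IntervalIntegrable (fun s => h s - a) volume t r :=
    ((hh.mono (Icc_subset_Icc ht.1 le_rfl)).intervalIntegrable_of_Icc ht.2).sub hconst
  have hlt' : IntervalIntegrable (fun s => h s - a) volume l t := hlt.sub hconst
  rw [← integral_add_adjacent_intervals hlt' htr, integral_sub hlt hconst,
    intervalIntegral.integral_const, smul_eq_mul]
  ring

theorem ContinuousOn.hasDerivWithinAt_integral_Icc {f : ℝ → ℝ} {a b t : ℝ}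
    (hf : ContinuousOn f (Icc a b)) (ht : t ∈ Icc a b) :
    HasDerivWithinAt (fun u => ∫ s in a..u, f s) (f t) (Icc a b) t :=
  have : Fact (t ∈ Icc a b) := ⟨ht⟩
  integral_hasDerivWithinAt_right
    ((hf.mono (Icc_subset_Icc le_rfl ht.2)).intervalIntegrable_of_Icc ht.1)
    (hf.stronglyMeasurableAtFilter_nhdsWithin measurableSet_Icc t) (hf t ht)

structure HasDecayingDeriv (T c ε : ℝ) (f f' : ℝ → ℝ) : Prop where
  hasDerivWithinAt : ∀ t ∈ Icc 0 T, HasDerivWithinAt f (f' t) (Icc 0 T) t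
  continuousOn_deriv : ContinuousOn f' (Icc 0 T)
  abs_deriv_le : ∀ t ∈ Icc 0 T, |f' t| ≤ c * (1 + t) ^ (-(2 + ε))

namespace HasDecayingDeriv

variable {T c ε a : ℝ} {f f' : ℝ → ℝ}

theorem continuousOn (hf : HasDecayingDeriv T c ε f f') : ContinuousOn f (Icc 0 T) :=
  fun t ht => (hf.hasDerivWithinAt t ht).continuousWithinAt

theorem nonneg (hf : HasDecayingDeriv T c ε f f') (hT : 0 ≤ T) : 0 ≤ c :=
  nonneg_of_mul_nonneg_left ((abs_nonneg _).trans (hf.abs_deriv_le 0 ⟨le_rfl, hT⟩))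
    (by positivity)

theorem abs_sub_le (hf : HasDecayingDeriv T c ε f f') (hε : 0 < ε) (ha : a ∈ Icc 0 T) :
    |f a - f T| ≤ c * (1 + a) ^ (-(1 + ε)) := by
  have hc := hf.nonneg (ha.1.trans ha.2)
  have hbound : ∀ s ∈ Icc a T, |f' s| ≤ c * (1 + s) ^ (-(1 + (1 + ε))) := fun s hs => by
    rw [show -(1 + (1 + ε)) = -(2 + ε) by ring]
    exact hf.abs_deriv_le s ⟨ha.1.trans hs.1, hs.2⟩
  calc |f a - f T| = |∫ s in a..T, f' s| := by
        rw [abs_sub_comm, integral_eq_sub_of_hasDerivWithinAt_Icc hf.hasDerivWithinAt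
          hf.continuousOn_deriv ha.2 (Icc_subset_Icc ha.1 le_rfl)]
    _ ≤ c / (1 + ε) * (1 + a) ^ (-(1 + ε)) :=
        abs_integral_le_of_abs_le_one_add_rpow (by linarith) hc ha.1 ha.2 hbound
    _ ≤ c * (1 + a) ^ (-(1 + ε)) :=
        mul_le_mul_of_nonneg_right (div_le_self hc (by linarith))
          (rpow_nonneg (by linarith [ha.1]) _)

theorem abs_integral_sub_le (hf : HasDecayingDeriv T c ε f f') (hε : 0 < ε)
    (ha : a ∈ Icc 0 T) : |∫ s in a..T, (f s - f T)| ≤ c / ε * (1 + a) ^ (-ε) :=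
  abs_integral_le_of_abs_le_one_add_rpow hε (hf.nonneg (ha.1.trans ha.2)) ha.1 ha.2
    fun _ hs => hf.abs_sub_le hε ⟨ha.1.trans hs.1, hs.2⟩

end HasDecayingDeriv

namespace Modulation

section

variable (T : ℝ) (γ v D α v' α' : ℝ → ℝ)

def terminalD : ℝ := D T - 2 * ∫ t in (0 : ℝ)..T, ∫ s in t..T, v' s

def terminalγ : ℝ := γ T + 2 * ∫ t in (0 : ℝ)..T, ∫ s in t..T, (v s * v' s - α s * α' s)

def y (t : ℝ) : ℝ := (2 * ∫ s in (0 : ℝ)..t, v s) + D t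

def yT (t : ℝ) : ℝ := 2 * t * v T + terminalD T D v'

def θ (t x : ℝ) : ℝ := v t * x - (∫ s in (0 : ℝ)..t, (v s ^ 2 - α s ^ 2)) + γ t

def θT (t x : ℝ) : ℝ := v T * x - t * (v T ^ 2 - α T ^ 2) + terminalγ T γ v α v' α'

def ρ (t x : ℝ) : ℝ :=
  θ γ v α t (x + yT T v D v' t) - θT T γ v α v' α' t (x + yT T v D v' t)

end

variable {T c ε t : ℝ} {γ v D α γ' v' D' α' : ℝ → ℝ}

theorem terminalD_eq (hT : 0 ≤ T) (hv : ∀ t ∈ Icc 0 T, HasDerivWithinAt v (v' t) (Icc 0 T) t)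
    (hv' : ContinuousOn v' (Icc 0 T)) :
    terminalD T D v' = D T + 2 * ∫ s in (0 : ℝ)..T, (v s - v T) := by
  rw [terminalD, integral_integral_deriv_eq hT hv hv']
  ring

theorem terminalγ_eq (hT : 0 ≤ T) (hv : ∀ t ∈ Icc 0 T, HasDerivWithinAt v (v' t) (Icc 0 T) t)
    (hv' : ContinuousOn v' (Icc 0 T)) (hα : ∀ t ∈ Icc 0 T, HasDerivWithinAt α (α' t) (Icc 0 T) t)
    (hα' : ContinuousOn α' (Icc 0 T)) :
    terminalγ T γ v α v' α' =
      γ T - ∫ s in (0 : ℝ)..T, (v s ^ 2 - α s ^ 2 - (v T ^ 2 - α T ^ 2)) := by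
  have hvc : ContinuousOn v (Icc 0 T) := fun t ht => (hv t ht).continuousWithinAt
  have hαc : ContinuousOn α (Icc 0 T) := fun t ht => (hα t ht).continuousWithinAt
  have hd : ∀ t ∈ Icc 0 T, HasDerivWithinAt (fun s => (v s ^ 2 - α s ^ 2) / 2)
      (v t * v' t - α t * α' t) (Icc 0 T) t := fun t ht =>
    ((((hv t ht).pow 2).sub ((hα t ht).pow 2)).div_const 2).congr_deriv (by ring)
  rw [terminalγ, integral_integral_deriv_eq hT hd ((hvc.mul hv').sub (hαc.mul hα'))]
  simp_rw [← sub_div, intervalIntegral.integral_div]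
  ring

theorem y_sub_yT_eq (hv : ∀ t ∈ Icc 0 T, HasDerivWithinAt v (v' t) (Icc 0 T) t)
    (hv' : ContinuousOn v' (Icc 0 T)) (ht : t ∈ Icc 0 T) :
    y v D t - yT T v D v' t = D t - D T - 2 * ∫ s in t..T, (v s - v T) := by
  have hvc : ContinuousOn v (Icc 0 T) := fun t ht => (hv t ht).continuousWithinAt
  rw [y, yT, terminalD_eq (ht.1.trans ht.2) hv hv', integral_tail_sub_const hvc ht]
  ring

theorem ρ_eq (hv : ∀ t ∈ Icc 0 T, HasDerivWithinAt v (v' t) (Icc 0 T) t)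
    (hv' : ContinuousOn v' (Icc 0 T)) (hα : ∀ t ∈ Icc 0 T, HasDerivWithinAt α (α' t) (Icc 0 T) t)
    (hα' : ContinuousOn α' (Icc 0 T)) (ht : t ∈ Icc 0 T) (x : ℝ) :
    ρ T γ v D α v' α' t x = (v t - v T) * (x + yT T v D v' t) + (γ t - γ T)
      + ∫ s in t..T, (v s ^ 2 - α s ^ 2 - (v T ^ 2 - α T ^ 2)) := by
  have hvc : ContinuousOn v (Icc 0 T) := fun t ht => (hv t ht).continuousWithinAt
  have hαc : ContinuousOn α (Icc 0 T) := fun t ht => (hα t ht).continuousWithinAt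
  have hg : ContinuousOn (fun s => v s ^ 2 - α s ^ 2) (Icc 0 T) := (hvc.pow 2).sub (hαc.pow 2)
  rw [ρ, θ, θT, terminalγ_eq (ht.1.trans ht.2) hv hv' hα hα', integral_tail_sub_const hg ht]
  ring

theorem hasDerivWithinAt_y (hv : ContinuousOn v (Icc 0 T))
    (hD : ∀ t ∈ Icc 0 T, HasDerivWithinAt D (D' t) (Icc 0 T) t) (ht : t ∈ Icc 0 T) :
    HasDerivWithinAt (y v D) (2 * v t + D' t) (Icc 0 T) t :=
  ((hv.hasDerivWithinAt_integral_Icc ht).const_mul 2).add (hD t ht)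

theorem hasDerivWithinAt_ρ (hγ : ∀ t ∈ Icc 0 T, HasDerivWithinAt γ (γ' t) (Icc 0 T) t)
    (hv : ∀ t ∈ Icc 0 T, HasDerivWithinAt v (v' t) (Icc 0 T) t) (hα : ContinuousOn α (Icc 0 T))
    (ht : t ∈ Icc 0 T) (x : ℝ) :
    HasDerivWithinAt (fun s => ρ T γ v D α v' α' s x)
      (v' t * (x + yT T v D v' t) + γ' t + (α t ^ 2 - α T ^ 2 - (v t - v T) ^ 2)) (Icc 0 T) t := by
  have hvc : ContinuousOn v (Icc 0 T) := fun t ht => (hv t ht).continuousWithinAt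
  have hz : HasDerivWithinAt (fun s => x + yT T v D v' s) (2 * v T) (Icc 0 T) t :=
    ((((hasDerivWithinAt_id t _).const_mul 2).mul_const (v T)).add_const _).const_add x
      |>.congr_deriv (by ring)
  have hg : ContinuousOn (fun s => v s ^ 2 - α s ^ 2) (Icc 0 T) := (hvc.pow 2).sub (hα.pow 2)
  exact (((((hv t ht).mul hz).sub (hg.hasDerivWithinAt_integral_Icc ht)).add (hγ t ht)).sub
    (((hz.const_mul (v T)).sub ((hasDerivWithinAt_id t _).mul_const (v T ^ 2 - α T ^ 2))).add_const
      (terminalγ T γ v α v' α'))).congr_deriv (by ring)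

theorem abs_add_yT_le (hv : HasDecayingDeriv T c ε v v') (hc : c ≤ 1) (hε : 0 < ε)
    (hvT : |v T| ≤ 1) (hDT : |D T| ≤ 1) (ht : t ∈ Icc 0 T) (x : ℝ) :
    |x + yT T v D v' t| ≤ (3 + 2 / ε) * ((1 + |x|) * (1 + t)) := by
  have h0 : (0 : ℝ) ∈ Icc 0 T := ⟨le_rfl, ht.1.trans ht.2⟩
  have hint := hv.abs_integral_sub_le hε h0
  rw [add_zero, one_rpow, mul_one] at hint
  have hterminal : |terminalD T D v'| ≤ 1 + 2 / ε := by
    rw [terminalD_eq h0.2 hv.hasDerivWithinAt hv.continuousOn_deriv]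
    calc _ ≤ |D T| + |2 * ∫ s in (0 : ℝ)..T, (v s - v T)| := abs_add_le _ _
      _ ≤ 1 + 2 * (c / ε) := by rw [abs_mul, abs_two]; gcongr
      _ ≤ 1 + 2 / ε := by rw [mul_div_assoc']; gcongr; linarith
  have hvt : |2 * t * v T| ≤ 2 * t := by
    rw [abs_mul, abs_of_nonneg (by linarith [ht.1] : 0 ≤ 2 * t)]
    exact mul_le_of_le_one_right (by linarith [ht.1]) hvT
  have hε' : 0 ≤ 2 / ε := by positivity
  calc |x + yT T v D v' t| ≤ |x| + |2 * t * v T| + |terminalD T D v'| := by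
        rw [yT, ← add_assoc]; exact abs_add_three _ _ _
    _ ≤ |x| + 2 * t + (1 + 2 / ε) := by gcongr
    _ ≤ _ := by nlinarith [abs_nonneg x, ht.1, mul_nonneg (abs_nonneg x) ht.1,
      mul_nonneg hε' (abs_nonneg x),
      mul_nonneg hε' ht.1, mul_nonneg (mul_nonneg hε' (abs_nonneg x)) ht.1]

theorem abs_ρ_le (hγ : HasDecayingDeriv T c ε γ γ') (hv : HasDecayingDeriv T c ε v v')
    (hα : HasDecayingDeriv T c ε α α') (hc : c ≤ 1) (hε : 0 < ε)
    (hvb : ∀ s ∈ Icc 0 T, |v s| ≤ 1) (hαb : ∀ s ∈ Icc 0 T, |α s| ≤ 1) (hDT : |D T| ≤ 1)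
    (ht : t ∈ Icc 0 T) (x : ℝ) :
    |ρ T γ v D α v' α' t x| ≤ (4 + 6 / ε) * c * (1 + |x|) * (1 + t) ^ (-ε) := by
  have hT : T ∈ Icc 0 T := ⟨ht.1.trans ht.2, le_rfl⟩
  have hc0 : 0 ≤ c := hv.nonneg hT.1
  have hP : 0 ≤ (1 + t) ^ (-ε) := rpow_nonneg (by linarith [ht.1]) _
  have hQ : 0 ≤ (1 + t) ^ (-(1 + ε)) := rpow_nonneg (by linarith [ht.1]) _
  have hQP : (1 + t) ^ (-(1 + ε)) ≤ (1 + t) ^ (-ε) :=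
    rpow_le_rpow_of_exponent_le (by linarith [ht.1]) (by linarith)
  have hvx : |(v t - v T) * (x + yT T v D v' t)|
      ≤ (3 + 2 / ε) * c * (1 + |x|) * (1 + t) ^ (-ε) := by
    rw [abs_mul, ← one_add_rpow_mul_self ht.1 (show -(1 + ε) + 1 = -ε by ring)]
    calc _ ≤ c * (1 + t) ^ (-(1 + ε)) * ((3 + 2 / ε) * ((1 + |x|) * (1 + t))) :=
          mul_le_mul (hv.abs_sub_le hε ht) (abs_add_yT_le hv hc hε (hvb T hT) hDT ht x)
            (abs_nonneg _) (mul_nonneg hc0 hQ)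
      _ = _ := by ring
  have hγt : |γ t - γ T| ≤ c * (1 + t) ^ (-ε) := (hγ.abs_sub_le hε ht).trans (by gcongr)
  have hint : |∫ s in t..T, (v s ^ 2 - α s ^ 2 - (v T ^ 2 - α T ^ 2))|
      ≤ 4 * c / ε * (1 + t) ^ (-ε) := by
    refine abs_integral_le_of_abs_le_one_add_rpow hε (by positivity) ht.1 ht.2 fun s hs => ?_
    have hs' : s ∈ Icc 0 T := ⟨ht.1.trans hs.1, hs.2⟩
    calc _ = |(v s ^ 2 - v T ^ 2) - (α s ^ 2 - α T ^ 2)| := by congr 1; ring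
      _ ≤ |v s ^ 2 - v T ^ 2| + |α s ^ 2 - α T ^ 2| := abs_sub _ _
      _ ≤ 2 * |v s - v T| + 2 * |α s - α T| :=
          add_le_add (abs_sq_sub_sq_le (hvb s hs') (hvb T hT))
            (abs_sq_sub_sq_le (hαb s hs') (hαb T hT))
      _ ≤ 2 * (c * (1 + s) ^ (-(1 + ε))) + 2 * (c * (1 + s) ^ (-(1 + ε))) := by
          gcongr
          exacts [hv.abs_sub_le hε hs', hα.abs_sub_le hε hs']
      _ = _ := by ring
  rw [ρ_eq hv.hasDerivWithinAt hv.continuousOn_deriv hα.hasDerivWithinAt hα.continuousOn_deriv ht]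
  calc _ ≤ _ := abs_add_three _ _ _
    _ ≤ _ := add_le_add_three hvx (hγt.trans (mul_le_mul_one_add_abs_mul hc0 hP x))
        (hint.trans (mul_le_mul_one_add_abs_mul (by positivity) hP x))
    _ = _ := by ring

theorem abs_derivWithin_ρ_le (hT : 0 < T) (hγ : HasDecayingDeriv T c ε γ γ')
    (hv : HasDecayingDeriv T c ε v v') (hα : HasDecayingDeriv T c ε α α') (hc : c ≤ 1) (hε : 0 < ε)
    (hvb : ∀ s ∈ Icc 0 T, |v s| ≤ 1) (hαb : ∀ s ∈ Icc 0 T, |α s| ≤ 1) (hDT : |D T| ≤ 1)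
    (ht : t ∈ Icc 0 T) (x : ℝ) :
    |derivWithin (fun s => ρ T γ v D α v' α' s x) (Icc 0 T) t|
      ≤ (8 + 2 / ε) * c * (1 + |x|) * (1 + t) ^ (-(1 + ε)) := by
  have hTmem : T ∈ Icc 0 T := ⟨hT.le, le_rfl⟩
  have hc0 : 0 ≤ c := hv.nonneg hT.le
  have hQ : 0 ≤ (1 + t) ^ (-(1 + ε)) := rpow_nonneg (by linarith [ht.1]) _
  have hR : 0 ≤ (1 + t) ^ (-(2 + ε)) := rpow_nonneg (by linarith [ht.1]) _
  have hRQ : (1 + t) ^ (-(2 + ε)) ≤ (1 + t) ^ (-(1 + ε)) :=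
    rpow_le_rpow_of_exponent_le (by linarith [ht.1]) (by linarith)
  have hv'x : |v' t * (x + yT T v D v' t)|
      ≤ (3 + 2 / ε) * c * (1 + |x|) * (1 + t) ^ (-(1 + ε)) := by
    rw [abs_mul, ← one_add_rpow_mul_self ht.1 (show -(2 + ε) + 1 = -(1 + ε) by ring)]
    calc _ ≤ c * (1 + t) ^ (-(2 + ε)) * ((3 + 2 / ε) * ((1 + |x|) * (1 + t))) :=
          mul_le_mul (hv.abs_deriv_le t ht) (abs_add_yT_le hv hc hε (hvb T hTmem) hDT ht x)
            (abs_nonneg _) (mul_nonneg hc0 hR)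
      _ = _ := by ring
  have hγ't : |γ' t| ≤ c * (1 + t) ^ (-(1 + ε)) := (hγ.abs_deriv_le t ht).trans (by gcongr)
  have hsq : |α t ^ 2 - α T ^ 2 - (v t - v T) ^ 2| ≤ 4 * c * (1 + t) ^ (-(1 + ε)) :=
    calc _ ≤ |α t ^ 2 - α T ^ 2| + |(v t - v T) ^ 2| := abs_sub _ _
      _ ≤ 2 * |α t - α T| + 2 * |v t - v T| := by
          rw [abs_sq]
          exact add_le_add (abs_sq_sub_sq_le (hαb t ht) (hαb T hTmem))
            (sq_sub_le_two_mul_abs (hvb t ht) (hvb T hTmem))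
      _ ≤ 2 * (c * (1 + t) ^ (-(1 + ε))) + 2 * (c * (1 + t) ^ (-(1 + ε))) := by
          gcongr
          exacts [hα.abs_sub_le hε ht, hv.abs_sub_le hε ht]
      _ = _ := by ring
  rw [(hasDerivWithinAt_ρ hγ.hasDerivWithinAt hv.hasDerivWithinAt hα.continuousOn ht x).derivWithin
    (uniqueDiffOn_Icc hT t ht)]
  calc _ ≤ _ := abs_add_three _ _ _
    _ ≤ _ := add_le_add_three hv'x (hγ't.trans (mul_le_mul_one_add_abs_mul hc0 hQ x))
        (hsq.trans (mul_le_mul_one_add_abs_mul (by positivity) hQ x))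
    _ = _ := by ring

theorem abs_y_sub_yT_le (hv : HasDecayingDeriv T c ε v v') (hD : HasDecayingDeriv T c ε D D')
    (hε : 0 < ε) (ht : t ∈ Icc 0 T) :
    |y v D t - yT T v D v' t| ≤ (1 + 2 / ε) * c * (1 + t) ^ (-ε) := by
  have hc0 : 0 ≤ c := hv.nonneg (ht.1.trans ht.2)
  rw [y_sub_yT_eq hv.hasDerivWithinAt hv.continuousOn_deriv ht]
  calc _ ≤ |D t - D T| + |2 * ∫ s in t..T, (v s - v T)| := abs_sub _ _
    _ ≤ c * (1 + t) ^ (-(1 + ε)) + 2 * (c / ε * (1 + t) ^ (-ε)) := by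
        rw [abs_mul, abs_two]
        gcongr
        exacts [hD.abs_sub_le hε ht, hv.abs_integral_sub_le hε ht]
    _ ≤ c * (1 + t) ^ (-ε) + 2 * (c / ε * (1 + t) ^ (-ε)) := by
        gcongr c * ?_ + _
        exact rpow_le_rpow_of_exponent_le (by linarith [ht.1]) (by linarith)
    _ = _ := by ring

theorem abs_derivWithin_y_sub_le (hT : 0 < T) (hv : HasDecayingDeriv T c ε v v')
    (hD : HasDecayingDeriv T c ε D D') (hε : 0 < ε) (ht : t ∈ Icc 0 T) :
    |derivWithin (y v D) (Icc 0 T) t - 2 * v T| ≤ 3 * c * (1 + t) ^ (-(1 + ε)) := by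
  have hc0 : 0 ≤ c := hv.nonneg hT.le
  rw [(hasDerivWithinAt_y hv.continuousOn hD.hasDerivWithinAt ht).derivWithin
    (uniqueDiffOn_Icc hT t ht)]
  calc _ = |2 * (v t - v T) + D' t| := by congr 1; ring
    _ ≤ 2 * |v t - v T| + |D' t| := (abs_add_le _ _).trans_eq (by rw [abs_mul, abs_two])
    _ ≤ 2 * (c * (1 + t) ^ (-(1 + ε))) + c * (1 + t) ^ (-(2 + ε)) := by
        gcongr
        exacts [hv.abs_sub_le hε ht, hD.abs_deriv_le t ht]
    _ ≤ 2 * (c * (1 + t) ^ (-(1 + ε))) + c * (1 + t) ^ (-(1 + ε)) := by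
        gcongr _ + c * ?_
        exact rpow_le_rpow_of_exponent_le (by linarith [ht.1]) (by linarith)
    _ = _ := by ring

end Modulation

theorem stmt_1 (ε : ℝ) (hε : 0 < ε) :
    ∃ C : ℝ, 0 < C ∧
      ∀ (δ T : ℝ), 0 < δ → δ ≤ 1 → 0 < T →
      ∀ (γ v D α γ' v' D' α' : ℝ → ℝ),
        (∀ t ∈ Set.Icc (0:ℝ) T, HasDerivWithinAt γ (γ' t) (Set.Icc 0 T) t) →
        (∀ t ∈ Set.Icc (0:ℝ) T, HasDerivWithinAt v (v' t) (Set.Icc 0 T) t) →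
        (∀ t ∈ Set.Icc (0:ℝ) T, HasDerivWithinAt D (D' t) (Set.Icc 0 T) t) →
        (∀ t ∈ Set.Icc (0:ℝ) T, HasDerivWithinAt α (α' t) (Set.Icc 0 T) t) →
        ContinuousOn γ' (Set.Icc 0 T) → ContinuousOn v' (Set.Icc 0 T) →
        ContinuousOn D' (Set.Icc 0 T) → ContinuousOn α' (Set.Icc 0 T) →
        (∀ t ∈ Set.Icc (0:ℝ) T,
          Real.sqrt (γ' t ^ 2 + v' t ^ 2 + D' t ^ 2 + α' t ^ 2)
            ≤ δ ^ 2 * (1 + t) ^ (-(2 + ε))) →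
        (∀ t ∈ Set.Icc (0:ℝ) T, |v t| + |D t| + |α t| ≤ 1) →
        let vT := v T
        let αT := α T
        let γT := γ T + 2 * ∫ t in (0:ℝ)..T, ∫ s in t..T, (v s * v' s - α s * α' s)
        let DT := D T - 2 * ∫ t in (0:ℝ)..T, ∫ s in t..T, v' s
        let y : ℝ → ℝ := fun t => (2 * ∫ s in (0:ℝ)..t, v s) + D t
        let yT : ℝ → ℝ := fun t => 2 * t * vT + DT
        let θ : ℝ → ℝ → ℝ := fun t x =>
          v t * x - (∫ s in (0:ℝ)..t, (v s ^ 2 - α s ^ 2)) + γ t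
        let θT : ℝ → ℝ → ℝ := fun t x => vT * x - t * (vT ^ 2 - αT ^ 2) + γT
        let ρ : ℝ → ℝ → ℝ := fun t x => θ t (x + yT t) - θT t (x + yT t)
        ∀ t ∈ Set.Icc (0:ℝ) T, ∀ x : ℝ,
          |ρ t x| ≤ C * δ ^ 2 * (1 + |x|) * (1 + t) ^ (-ε) ∧
          |y t - yT t| ≤ C * δ ^ 2 * (1 + t) ^ (-ε) ∧
          |derivWithin (fun s => ρ s x) (Set.Icc 0 T) t|
            ≤ C * δ ^ 2 * (1 + |x|) * (1 + t) ^ (-(1 + ε)) ∧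
          |derivWithin y (Set.Icc 0 T) t - 2 * vT|
            ≤ C * δ ^ 2 * (1 + t) ^ (-(1 + ε)) := by
  refine ⟨8 + 8 / ε, by positivity, ?_⟩
  intro δ T hδ₀ hδ hT γ v D α γ' v' D' α' hγ hv hD hα hγ' hv' hD' hα' hπ hbd
    vT αT γT DT y yT θ θT ρ t ht x
  have decay : ∀ f f' : ℝ → ℝ, (∀ t ∈ Icc 0 T, HasDerivWithinAt f (f' t) (Icc 0 T) t) →
      ContinuousOn f' (Icc 0 T) → (∀ s, f' s ^ 2 ≤ γ' s ^ 2 + v' s ^ 2 + D' s ^ 2 + α' s ^ 2) →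
      HasDecayingDeriv T (δ ^ 2) ε f f' := fun f f' hf hf' hle =>
    ⟨hf, hf', fun s hs => (abs_le_sqrt (hle s)).trans (hπ s hs)⟩
  have hγd := decay γ γ' hγ hγ' fun s => by
    linarith [sq_nonneg (v' s), sq_nonneg (D' s), sq_nonneg (α' s)]
  have hvd := decay v v' hv hv' fun s => by
    linarith [sq_nonneg (γ' s), sq_nonneg (D' s), sq_nonneg (α' s)]
  have hDd := decay D D' hD hD' fun s => by
    linarith [sq_nonneg (γ' s), sq_nonneg (v' s), sq_nonneg (α' s)]
  have hαd := decay α α' hα hα' fun s => by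
    linarith [sq_nonneg (γ' s), sq_nonneg (v' s), sq_nonneg (D' s)]
  have hvb : ∀ s ∈ Icc 0 T, |v s| ≤ 1 := fun s hs => by
    linarith [hbd s hs, abs_nonneg (D s), abs_nonneg (α s)]
  have hαb : ∀ s ∈ Icc 0 T, |α s| ≤ 1 := fun s hs => by
    linarith [hbd s hs, abs_nonneg (v s), abs_nonneg (D s)]
  have hDT : |D T| ≤ 1 := by linarith [hbd T ⟨hT.le, le_rfl⟩, abs_nonneg (v T), abs_nonneg (α T)]
  have hc : δ ^ 2 ≤ 1 := pow_le_one₀ hδ₀.le hδ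
  refine ⟨(Modulation.abs_ρ_le hγd hvd hαd hc hε hvb hαb hDT ht x).trans ?_,
    (Modulation.abs_y_sub_yT_le hvd hDd hε ht).trans ?_,
    (Modulation.abs_derivWithin_ρ_le hT hγd hvd hαd hc hε hvb hαb hDT ht x).trans ?_,
    (Modulation.abs_derivWithin_y_sub_le hT hvd hDd hε ht).trans ?_⟩
  all_goals gcongr
  all_goals first
    | exact rpow_nonneg (by linarith [ht.1]) _
    | linarith [show 0 < 8 / ε by positivity]
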